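/- If X is an Irr-continuous sup-sober T₀-space, or an SI⁻-continuous T₀-space, then the Irr-convergence class 𝓘 satisfies Kelley's (Iterated limits) axiom: whenever a net (x_i)_{i∈I} Irr-converges to x and for each i ∈ I a net (x_{i,j})_{j∈J(i)} Irr-converges to x_i, the net (x_{i,f(i)}) indexed by I × ∏_{i∈I} J(i) (with the product pre-order) Irr-converges to x. -/

import Mathlib

universe u v w

open Set

/-- A preordered index type is a (nonempty) directed index set for nets. -/
def IsDirIdx (I : Type v) [Preorder I] : Prop :=
  Nonempty I ∧ ∀ i j : I, ∃ k, i ≤ k ∧ j ≤ k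

/-- Convergence of a net with respect to a topology `t` on `X`. -/
def NetConv {X : Type u} (t : TopologicalSpace X) {I : Type v} [Preorder I]
    (net : I → X) (x : X) : Prop :=
  ∀ U : Set X, t.IsOpen U → x ∈ U → ∃ k, ∀ i, k ≤ i → net i ∈ U

section
variable {X : Type u} [TopologicalSpace X]

/-- The specialisation order: `x ≤ y` iff `x ∈ cl {y}`. -/
def sLE (x y : X) : Prop := x ∈ closure ({y} : Set X)

/-- `b` is an upper bound of `A` in the specialisation order. -/
def IsUB (A : Set X) (b : X) : Prop := ∀ a ∈ A, sLE a b

/-- `s` is the supremum (least upper bound) of `A` in the specialisation order. -/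
def IsSupSpec (A : Set X) (s : X) : Prop := IsUB A s ∧ ∀ b, IsUB A b → sLE s b

/-- The upper set `↑x` in the specialisation order. -/
def upS (x : X) : Set X := {u | sLE x u}

/-- The lower set `↓A` in the specialisation order. -/
def downS (A : Set X) : Set X := {u | ∃ a ∈ A, sLE u a}

/-- The Irr-way-below relation: `x ≪_Irr y` iff every irreducible set `E`
whose supremum exists and dominates `y` meets `↑x`. -/
def wbIrr (x y : X) : Prop :=
  ∀ E : Set X, IsIrreducible E → ∀ s : X, IsSupSpec E s → sLE y s → (E ∩ upS x).Nonempty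

/-- `↡x = {u | u ≪_Irr x}`. -/
def ddIrr (x : X) : Set X := {u | wbIrr u x}

/-- `↟x = {u | x ≪_Irr u}`. -/
def uuIrr (x : X) : Set X := {u | wbIrr x u}

/-- A directed subset (w.r.t. the specialisation order): nonempty and every
pair of elements has an upper bound in the set. -/
def DirectedSub (D : Set X) : Prop :=
  D.Nonempty ∧ ∀ a ∈ D, ∀ b ∈ D, ∃ c ∈ D, sLE a c ∧ sLE b c

/-- `e` is an eventual lower bound of the net `net`. -/
def EvLB {I : Type v} [Preorder I] (net : I → X) (e : X) : Prop :=
  ∃ k, ∀ i, k ≤ i → sLE e (net i)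

/-- Irr-convergence: the net `net` Irr-converges to `y` iff there is an
irreducible set `E` with a supremum `≥ y` consisting of eventual lower
bounds of the net. -/
def IrrConv {I : Type v} [Preorder I] (net : I → X) (y : X) : Prop :=
  ∃ E : Set X, IsIrreducible E ∧ (∃ s, IsSupSpec E s ∧ sLE y s) ∧ ∀ e ∈ E, EvLB net e

end

/-- Sup-sobriety: every closed irreducible set having a supremum is the
closure of the singleton of its supremum. -/
def SupSober (X : Type u) [TopologicalSpace X] : Prop :=
  ∀ F : Set X, IsClosed F → IsIrreducible F → ∀ s : X, IsSupSpec F s → F = closure {s}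

/-- `U` is open in the irreducibly-derived topology `τ_SI`. -/
def SIOpen {X : Type u} [TopologicalSpace X] (U : Set X) : Prop :=
  IsOpen U ∧ ∀ E : Set X, IsIrreducible E → ∀ s : X, IsSupSpec E s → s ∈ U →
    (E ∩ U).Nonempty

/-- Interior with respect to the irreducibly-derived topology. -/
def SIint {X : Type u} [TopologicalSpace X] (A : Set X) : Set X :=
  ⋃₀ {U : Set X | SIOpen U ∧ U ⊆ A}

/-- Irr-continuity: every `↡x` is irreducible with supremum `x`. -/
def IrrCont (X : Type u) [TopologicalSpace X] : Prop :=
  ∀ x : X, IsIrreducible (ddIrr x) ∧ IsSupSpec (ddIrr x) x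

/-- SI⁻-continuity: every `↡x` contains a directed subset with supremum `x`. -/
def SImCont (X : Type u) [TopologicalSpace X] : Prop :=
  ∀ x : X, ∃ D : Set X, D ⊆ ddIrr x ∧ DirectedSub D ∧ IsSupSpec D x

/-- The `*`-property: for every irreducible `F` with a supremum there is a
directed subset of `↓F` with the same supremum. -/
def StarProp (X : Type u) [TopologicalSpace X] : Prop :=
  ∀ F : Set X, IsIrreducible F → ∀ s : X, IsSupSpec F s →
    ∃ D : Set X, D ⊆ downS F ∧ DirectedSub D ∧ IsSupSpec D s

/-- The `⊕`-property: every `↟x` is open. -/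
def OplusProp (X : Type u) [TopologicalSpace X] : Prop :=
  ∀ x : X, IsOpen (uuIrr x)

/-- C-space: for every open `U` and `x ∈ U` there is `y ∈ U` with
`x ∈ int (↑y)`. -/
def CSpace (X : Type u) [TopologicalSpace X] : Prop :=
  ∀ U : Set X, IsOpen U → ∀ x ∈ U, ∃ y ∈ U, x ∈ interior (upS y)

/-- The Irr-convergence class is topological: some topology induces it. -/
def IrrTopological (X : Type u) [TopologicalSpace X] : Prop :=
  ∃ t : TopologicalSpace X, ∀ (I : Type u) [Preorder I], IsDirIdx I →
    ∀ (net : I → X) (y : X), IrrConv net y ↔ NetConv t net y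

/-- The family `τ_𝓘` of sets induced by the Irr-convergence class. -/
def tauI (X : Type u) [TopologicalSpace X] : Set (Set X) :=
  {U | ∀ (I : Type u) [Preorder I], IsDirIdx I → ∀ (net : I → X) (y : X),
      IrrConv net y → y ∈ U → ∃ k, ∀ i, k ≤ i → net i ∈ U}

/-- Kelley's (Iterated limits) axiom for the Irr-convergence class. -/
def IterLimAxiom (X : Type u) [TopologicalSpace X] : Prop :=
  ∀ (I : Type u) [Preorder I], IsDirIdx I →
    ∀ (J : I → Type u) [∀ i, Preorder (J i)], (∀ i, IsDirIdx (J i)) →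
      ∀ (xi : I → X) (xx : ∀ i, J i → X) (x : X),
        IrrConv xi x → (∀ i, IrrConv (xx i) (xi i)) →
        IrrConv (fun p : I × (∀ i, J i) => xx p.1 (p.2 p.1)) x

/-!
Every point `x` of either kind of space is the supremum of an irreducible set `F` of points `d`
with `d ≪_Irr e ≪_Irr x` for some `e`: in the Irr-continuous sup-sober case `F = ⋃_{e ≪ x} ↡e`,
whose closure is that of `↡x` by sup-sobriety; in the SI⁻-continuous case `F = ⋃_{e ∈ D x} D e` for
the directed sets `D y ⊆ ↡y`, which is again directed. If `xᵢ` Irr-converges to `x`, then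
`e ≪_Irr x` puts `e` eventually below `xᵢ`, hence `d ≪_Irr xᵢ` eventually, hence `d` is eventually
below each of these inner nets `xᵢⱼ`; choosing the inner thresholds coordinatewise makes `d` an
eventual lower bound of the diagonal net, so `F` witnesses its Irr-convergence to `x`.
-/

def HasDoublyWayBelowBasis (X : Type u) [TopologicalSpace X] : Prop :=
  ∀ x : X, ∃ F : Set X, IsIrreducible F ∧ IsSupSpec F x ∧ ∀ d ∈ F, ∃ e, wbIrr d e ∧ wbIrr e x

section
variable {X : Type u} [TopologicalSpace X]

lemma sLE_refl (x : X) : sLE x x := subset_closure rfl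

lemma sLE_trans {x y z : X} (hxy : sLE x y) (hyz : sLE y z) : sLE x z :=
  specializes_iff_mem_closure.1 <|
    (specializes_iff_mem_closure.2 hyz).trans (specializes_iff_mem_closure.2 hxy)

lemma isSupSpec_singleton (y : X) : IsSupSpec ({y} : Set X) y :=
  ⟨fun _ ha => subset_closure ha, fun _ hb => hb y rfl⟩

lemma isSupSpec_closure {A : Set X} {s : X} (h : IsSupSpec A s) : IsSupSpec (closure A) s :=
  ⟨fun _ ha => closure_minimal h.1 isClosed_closure ha,
    fun b hb => h.2 b fun a ha => hb a (subset_closure ha)⟩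

lemma isSupSpec_biUnion {A : Set X} {x : X} {B : X → Set X} (hA : IsSupSpec A x)
    (hB : ∀ e ∈ A, IsSupSpec (B e) e) : IsSupSpec (⋃ e ∈ A, B e) x := by
  refine ⟨?_, fun b hb => hA.2 b fun e he => (hB e he).2 b fun d hd => hb d ?_⟩
  · simp only [IsUB, mem_iUnion₂]
    rintro d ⟨e, he, hd⟩
    exact sLE_trans ((hB e he).1 d hd) (hA.1 e he)
  · exact mem_biUnion he hd

lemma DirectedSub.isIrreducible {D : Set X} (hD : DirectedSub D) : IsIrreducible D := by
  have mem_of_le {a c : X} {U : Set X} (hU : IsOpen U) (ha : a ∈ U) (hac : sLE a c) : c ∈ U := by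
    obtain ⟨_, hcU, rfl⟩ := mem_closure_iff.1 hac U hU ha
    exact hcU
  refine ⟨hD.1, fun U V hU hV ⟨a, haD, haU⟩ ⟨b, hbD, hbV⟩ => ?_⟩
  obtain ⟨c, hcD, hac, hbc⟩ := hD.2 a haD b hbD
  exact ⟨c, hcD, mem_of_le hU haU hac, mem_of_le hV hbV hbc⟩

lemma wbIrr.le {u y : X} (h : wbIrr u y) : sLE u y := by
  obtain ⟨v, rfl, huv⟩ := h {y} isIrreducible_singleton y (isSupSpec_singleton y) (sLE_refl y)
  exact huv

lemma wbIrr.trans_sLE {u y z : X} (h : wbIrr u y) (hyz : sLE y z) : wbIrr u z :=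
  fun E hE s hs hzs => h E hE s hs (sLE_trans hyz hzs)

lemma wbIrr.exists_le_of_directedSub {u y : X} {D : Set X} (h : wbIrr u y) (hD : DirectedSub D)
    (hDy : IsSupSpec D y) : ∃ c ∈ D, sLE u c :=
  h D hD.isIrreducible y hDy (sLE_refl y)

lemma EvLB.of_sLE {I : Type*} [Preorder I] {net : I → X} {u e : X} (he : EvLB net e)
    (hue : sLE u e) : EvLB net u :=
  he.imp fun _ hk i hi => sLE_trans hue (hk i hi)

lemma IrrConv.evLB_of_wbIrr {I : Type*} [Preorder I] {net : I → X} {y u : X}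
    (h : IrrConv net y) (hu : wbIrr u y) : EvLB net u := by
  obtain ⟨E, hE, ⟨s, hs, hys⟩, hlb⟩ := h
  obtain ⟨e, heE, hue⟩ := hu E hE s hs hys
  exact (hlb e heE).of_sLE hue

lemma evLB_diagonal {I : Type*} [Preorder I] {J : I → Type*} [∀ i, Preorder (J i)]
    (hJ : ∀ i, Nonempty (J i)) (xx : ∀ i, J i → X) {d : X} (k : I)
    (h : ∀ i, k ≤ i → EvLB (xx i) d) :
    EvLB (fun p : I × (∀ i, J i) => xx p.1 (p.2 p.1)) d := by
  have threshold : ∀ i, ∃ m : J i, k ≤ i → ∀ j, m ≤ j → sLE d (xx i j) := fun i => by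
    by_cases hi : k ≤ i
    · exact (h i hi).imp fun _ hm _ => hm
    · exact ⟨Classical.choice (hJ i), fun h => absurd h hi⟩
  choose g hg using threshold
  exact ⟨(k, g), fun ⟨i, f⟩ ⟨hki, hgf⟩ => hg i hki (f i) (hgf i)⟩

lemma hasDoublyWayBelowBasis_of_irrCont_of_supSober (hI : IrrCont X) (hS : SupSober X) :
    HasDoublyWayBelowBasis X := by
  intro x
  have mem_closure_ddIrr (e : X) : e ∈ closure (ddIrr e) := by
    rw [hS _ isClosed_closure (hI e).1.closure e (isSupSpec_closure (hI e).2)]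
    exact subset_closure rfl
  have closure_eq : closure (⋃ e ∈ ddIrr x, ddIrr e) = closure (ddIrr x) := by
    refine subset_antisymm (closure_mono <| iUnion₂_subset fun e he d hd =>
      wbIrr.trans_sLE hd (wbIrr.le he)) ?_
    refine closure_minimal (fun e he => ?_) isClosed_closure
    exact closure_mono (subset_biUnion_of_mem (u := ddIrr) he) (mem_closure_ddIrr e)
  refine ⟨⋃ e ∈ ddIrr x, ddIrr e, ?_, isSupSpec_biUnion (hI x).2 fun e _ => (hI e).2, ?_⟩
  · rw [← isIrreducible_iff_closure, closure_eq, isIrreducible_iff_closure]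
    exact (hI x).1
  · simp only [mem_iUnion₂]
    rintro d ⟨e, he, hd⟩
    exact ⟨e, hd, he⟩

lemma hasDoublyWayBelowBasis_of_sImCont (hC : SImCont X) : HasDoublyWayBelowBasis X := by
  choose D hDsub hDdir hDsup using hC
  intro x
  have directed : DirectedSub (⋃ e ∈ D x, D e) := by
    refine ⟨?_, ?_⟩
    · obtain ⟨e, he⟩ := (hDdir x).1
      exact nonempty_biUnion.2 ⟨e, he, (hDdir e).1⟩
    · simp only [mem_iUnion₂]
      rintro a ⟨e₁, he₁, ha⟩ b ⟨e₂, he₂, hb⟩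
      obtain ⟨e, he, he₁e, he₂e⟩ := (hDdir x).2 e₁ he₁ e₂ he₂
      obtain ⟨c₁, hc₁, hac₁⟩ :=
        (wbIrr.trans_sLE (hDsub e₁ ha) he₁e).exists_le_of_directedSub (hDdir e) (hDsup e)
      obtain ⟨c₂, hc₂, hbc₂⟩ :=
        (wbIrr.trans_sLE (hDsub e₂ hb) he₂e).exists_le_of_directedSub (hDdir e) (hDsup e)
      obtain ⟨c, hc, hc₁c, hc₂c⟩ := (hDdir e).2 c₁ hc₁ c₂ hc₂
      exact ⟨c, ⟨e, he, hc⟩, sLE_trans hac₁ hc₁c, sLE_trans hbc₂ hc₂c⟩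
  refine ⟨⋃ e ∈ D x, D e, directed.isIrreducible,
    isSupSpec_biUnion (hDsup x) fun e _ => hDsup e, ?_⟩
  simp only [mem_iUnion₂]
  rintro d ⟨e, he, hd⟩
  exact ⟨e, hDsub e hd, hDsub x he⟩

lemma HasDoublyWayBelowBasis.iterLimAxiom (hX : HasDoublyWayBelowBasis X) : IterLimAxiom X := by
  intro I _ _ J _ hJ xi xx x hxi hxx
  obtain ⟨F, hF, hFx, hFwb⟩ := hX x
  refine ⟨F, hF, ⟨x, hFx, sLE_refl x⟩, fun d hd => ?_⟩
  obtain ⟨e, hde, hex⟩ := hFwb d hd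
  obtain ⟨k, hk⟩ := hxi.evLB_of_wbIrr hex
  exact evLB_diagonal (fun i => (hJ i).1) xx k fun i hi =>
    (hxx i).evLB_of_wbIrr (wbIrr.trans_sLE hde (hk i hi))

end

theorem irrConv_iteratedLimits_general {X : Type u} [TopologicalSpace X]
    (hX : (IrrCont X ∧ SupSober X) ∨ SImCont X) :
    IterLimAxiom X := by
  rcases hX with ⟨hI, hS⟩ | hC
  · exact (hasDoublyWayBelowBasis_of_irrCont_of_supSober hI hS).iterLimAxiom
  · exact (hasDoublyWayBelowBasis_of_sImCont hC).iterLimAxiom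

/-- the (Iterated limits) axiom holds in Irr-continuous
sup-sober spaces and in SI⁻-continuous spaces. -/
theorem irrConv_iteratedLimits {X : Type u} [TopologicalSpace X] [T0Space X]
    (hX : (IrrCont X ∧ SupSober X) ∨ SImCont X) :
    IterLimAxiom X :=
  irrConv_iteratedLimits_general hX
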